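/- arXiv:1904.06229 — 2 statements merged into one kernel-verified Lean document; each statement's English description precedes it below -/
import Mathlib

section
/- Ryser's formula: for any n×n matrix A over a commutative ring, per(A) = (-1)^n · Σ_{J ⊆ {1,…,n}} (-1)^{|J|} · Π_{i=1}^n Σ_{j ∈ J} a_{i,j}. -/
open Finset

private lemma powerset_sum_R {α : Type*} [DecidableEq α] {R : Type*} [CommRing R] (s : Finset α) :
    (∑ m ∈ s.powerset, (-1 : R) ^ m.card) = if s = ∅ then 1 else 0 := by
  have := Finset.sum_powerset_neg_one_pow_card (x := s)
  calc (∑ m ∈ s.powerset, (-1 : R) ^ m.card)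
      = ((∑ m ∈ s.powerset, (-1 : ℤ) ^ m.card : ℤ) : R) := by push_cast; ring
    _ = if s = ∅ then 1 else 0 := by rw [this]; split <;> simp

private lemma superset_sum {n : ℕ} {R : Type*} [CommRing R] (S : Finset (Fin n)) :
    (∑ J : Finset (Fin n), if S ⊆ J then ((-1 : R) ^ J.card) else 0)
      = if S = univ then (-1 : R) ^ n else 0 := by
  rw [← Finset.sum_filter]
  have hb : ∑ J ∈ univ.filter (fun J => S ⊆ J), ((-1 : R) ^ J.card)
      = ∑ K ∈ Sᶜ.powerset, ((-1 : R) ^ (S ∪ K).card) := by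
    refine Finset.sum_nbij' (fun J => J \ S) (fun K => S ∪ K) ?_ ?_ ?_ ?_ ?_
    · intro J hJ
      simp only [mem_filter, mem_univ, true_and] at hJ
      simp [Finset.mem_powerset, Finset.subset_compl_comm]
      intro x hx; simp [Finset.mem_sdiff]; tauto
    · intro K hK
      simp [Finset.mem_powerset] at hK
      simp
    · intro J hJ
      simp only [mem_filter, mem_univ, true_and] at hJ
      show S ∪ (J \ S) = J
      exact Finset.union_sdiff_of_subset hJ
    · intro K hK
      simp [Finset.mem_powerset, Finset.subset_compl_comm] at hK
      show (S ∪ K) \ S = K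
      rw [Finset.union_sdiff_cancel_left]
      rw [Finset.disjoint_iff_inter_eq_empty, Finset.eq_empty_iff_forall_notMem]
      intro x hx
      simp [Finset.mem_inter] at hx
      exact absurd (hK hx.1) (by simp [hx.2])
    · intro J hJ
      simp only [mem_filter, mem_univ, true_and] at hJ
      show _ = (-1 : R) ^ (S ∪ (J \ S)).card
      rw [Finset.union_sdiff_of_subset hJ]
  rw [hb]
  have hc : ∀ K ∈ Sᶜ.powerset, ((-1 : R) ^ (S ∪ K).card)
      = (-1 : R) ^ S.card * (-1 : R) ^ K.card := by
    intro K hK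
    simp [Finset.mem_powerset] at hK
    have hdisj : Disjoint S K := by
      rw [Finset.disjoint_left]; intro a ha haK
      exact absurd (hK haK) (by simp [ha])
    rw [Finset.card_union_of_disjoint hdisj, pow_add]
  rw [Finset.sum_congr rfl hc, ← Finset.mul_sum, powerset_sum_R]
  by_cases h : S = univ
  · simp [h, Finset.card_univ]
  · have : Sᶜ ≠ ∅ := by
      intro hc'
      exact h (by simpa [Finset.compl_eq_empty_iff] using hc')
    simp [this, h]

/-- The permanent of an `n × n` matrix. -/
def perm {n : ℕ} {R : Type*} [CommRing R] (A : Matrix (Fin n) (Fin n) R) : R :=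
  ∑ σ : Equiv.Perm (Fin n), ∏ i, A i (σ i)

/-- Ryser's formula. -/
theorem ryser_formula {n : ℕ} {R : Type*} [CommRing R] (A : Matrix (Fin n) (Fin n) R) :
    perm A = (-1 : R) ^ n *
      ∑ J : Finset (Fin n), (-1 : R) ^ J.card * ∏ i, ∑ j ∈ J, A i j := by
  have expand : ∀ J : Finset (Fin n),
      ∏ i, ∑ j ∈ J, A i j = ∑ f ∈ Fintype.piFinset (fun _ => J), ∏ i, A i (f i) :=
    fun J => Finset.prod_univ_sum _ _
  have key : ∑ J : Finset (Fin n), (-1 : R) ^ J.card * ∏ i, ∑ j ∈ J, A i j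
      = ∑ f : Fin n → Fin n, (∏ i, A i (f i)) *
          (if Finset.image f univ = univ then (-1 : R) ^ n else 0) := by
    calc ∑ J : Finset (Fin n), (-1 : R) ^ J.card * ∏ i, ∑ j ∈ J, A i j
        = ∑ J : Finset (Fin n), ∑ f : Fin n → Fin n,
            (if Finset.image f univ ⊆ J then (-1 : R) ^ J.card * ∏ i, A i (f i) else 0) := by
          refine Finset.sum_congr rfl fun J _ => ?_
          rw [expand J, Finset.mul_sum]
          rw [← Finset.sum_filter]
          refine Finset.sum_congr ?_ (fun _ _ => rfl)
          ext f
          simp [Fintype.mem_piFinset, Finset.image_subset_iff]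
      _ = ∑ f : Fin n → Fin n, ∑ J : Finset (Fin n),
            (if Finset.image f univ ⊆ J then (-1 : R) ^ J.card * ∏ i, A i (f i) else 0) :=
          Finset.sum_comm
      _ = ∑ f : Fin n → Fin n, (∏ i, A i (f i)) *
            (if Finset.image f univ = univ then (-1 : R) ^ n else 0) := by
          refine Finset.sum_congr rfl fun f _ => ?_
          rw [← superset_sum (Finset.image f univ), Finset.mul_sum]
          refine Finset.sum_congr rfl fun J _ => ?_
          split <;> ring
  rw [key]
  have split : ∑ f : Fin n → Fin n, (∏ i, A i (f i)) *
          (if Finset.image f univ = univ then (-1 : R) ^ n else 0)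
      = ∑ f ∈ univ.filter (fun f : Fin n → Fin n => Function.Bijective f),
          (∏ i, A i (f i)) * (-1 : R) ^ n := by
    rw [Finset.sum_filter]
    refine Finset.sum_congr rfl fun f _ => ?_
    have himg : Finset.image f univ = univ ↔ Function.Bijective f := by
      constructor
      · intro h
        have hsurj : Function.Surjective f := by
          intro y
          have : y ∈ Finset.image f univ := by rw [h]; exact Finset.mem_univ y
          simpa using this
        exact Finite.surjective_iff_bijective.mp hsurj
      · intro h
        apply Finset.eq_univ_of_card
        rw [Finset.card_image_of_injective _ h.1, Finset.card_univ]
    by_cases h : Function.Bijective f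
    · rw [if_pos (himg.mpr h), if_pos h]
    · rw [if_neg h, if_neg (fun hc => h (himg.mp hc)), mul_zero]
  rw [split, ← Finset.sum_mul]
  have hperm : ∑ f ∈ univ.filter (fun f : Fin n → Fin n => Function.Bijective f),
      (∏ i, A i (f i)) = perm A := by
    rw [perm]
    refine Finset.sum_bij'
      (fun (f : Fin n → Fin n) (hf : f ∈ univ.filter fun f => Function.Bijective f) =>
        Equiv.ofBijective f ((Finset.mem_filter.mp hf).2))
      (fun (σ : Equiv.Perm (Fin n)) _ => ⇑σ) ?_ ?_ ?_ ?_ ?_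
    · intro f hf; exact Finset.mem_univ _
    · intro σ _; exact Finset.mem_filter.mpr ⟨Finset.mem_univ _, σ.bijective⟩
    · intro f hf; ext x; rfl
    · intro σ _; ext x; rfl
    · intro f hf; rfl
  rw [hperm]
  have hone : ((-1 : R) ^ n) * ((-1 : R) ^ n) = 1 := by
    rw [← pow_add, ← two_mul, pow_mul]; norm_num
  rw [mul_comm (perm A), ← mul_assoc, hone, one_mul]
end

section
/- Ryser's formula with repeated columns: if the distinct columns of an n×n matrix A are c̄_1,…,c̄_R and A has m_j columns equal to c̄_j (so Σ_j m_j = n), then per(A) = (-1)^n · Σ_{(f_1,…,f_R), 0 ≤ f_t ≤ m_t} (-1)^{Σ_t f_t} · (Π_{j=1}^R binom(m_j, f_j)) · Π_{i=1}^n Σ_{k=1}^R f_k · c̄_k(i). -/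
/-!
A map `φ` from rows to columns is a permutation iff it misses no column, so inclusion–exclusion
over the set of missed columns gives Ryser's formula
`perm A = (-1)^n ∑_S (-1)^|S| ∏_i ∑_{j ∈ S} A i j`.
When the columns repeat, the summand for a set `S` of columns depends only on the number `f k`
of copies of `c k` that `S` contains, and `∏_k (m k).choose (f k)` sets `S` share this profile.
-/

open Finset

theorem Fintype.sum_perm_eq_sum_surjective {α M : Type*} [Fintype α] [DecidableEq α]
    [AddCommMonoid M] (F : (α → α) → M) :
    ∑ σ : Equiv.Perm α, F σ = ∑ φ : α → α with φ.Surjective, F φ :=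
  sum_bij (fun σ _ => σ) (fun σ _ => by simpa using σ.surjective)
    (fun _ _ _ _ h => Equiv.coe_fn_injective h)
    (fun φ hφ => ⟨.ofBijective φ (Finite.surjective_iff_bijective.mp (by simpa using hφ)),
      mem_univ _, rfl⟩)
    (fun _ _ => rfl)

theorem Fintype.sum_surjective_prod_eq_sum_compl {ι κ R : Type*} [Fintype ι] [DecidableEq ι]
    [Fintype κ] [DecidableEq κ] [CommRing R] (a : ι → κ → R) :
    ∑ φ : ι → κ with φ.Surjective, ∏ i, a i (φ i) =
      ∑ T : Finset κ, (-1 : R) ^ #T * ∏ i, ∑ j ∈ Tᶜ, a i j := by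
  have hsurj : ({φ : ι → κ | φ.Surjective} : Finset (ι → κ)) =
      univ.inf fun j => ({φ | j ∉ Set.range φ} : Finset (ι → κ))ᶜ := by
    ext φ
    simp only [Finset.mem_inf, mem_compl, mem_filter, mem_univ, true_and, not_not, forall_const]
    rfl
  have hmiss (T : Finset κ) : T.inf (fun j => ({φ | j ∉ Set.range φ} : Finset (ι → κ))) =
      Fintype.piFinset fun _ => Tᶜ := by
    ext φ
    simp only [Finset.mem_inf, mem_filter, mem_univ, true_and, Set.mem_range, not_exists,
      Fintype.mem_piFinset, mem_compl]
    exact ⟨fun h i hi => h _ hi i rfl, fun h j hj i hi => h i (hi ▸ hj)⟩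
  rw [hsurj, inclusion_exclusion_sum_inf_compl]
  refine Finset.sum_congr rfl fun T _ => ?_
  rw [hmiss, ← prod_univ_sum, zsmul_eq_mul]
  push_cast
  rfl

theorem Finset.neg_one_pow_card_mul_neg_one_pow_card {α R : Type*} [Fintype α] [DecidableEq α]
    [Monoid R] [HasDistribNeg R] (S : Finset α) :
    (-1 : R) ^ Fintype.card α * (-1) ^ #S = (-1) ^ #Sᶜ := by
  rw [← card_compl_add_card S, pow_add, mul_assoc, ← pow_add, Even.neg_one_pow ⟨_, rfl⟩,
    mul_one]

theorem perm_eq_sum_finset {n : ℕ} {R : Type*} [CommRing R] (A : Matrix (Fin n) (Fin n) R) :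
    perm A = (-1 : R) ^ n * ∑ S : Finset (Fin n), (-1 : R) ^ #S * ∏ i, ∑ j ∈ S, A i j := by
  have hsign (S : Finset (Fin n)) : (-1 : R) ^ n * (-1) ^ #S = (-1) ^ #Sᶜ := by
    simpa using neg_one_pow_card_mul_neg_one_pow_card (R := R) S
  calc perm A = ∑ T : Finset (Fin n), (-1 : R) ^ #T * ∏ i, ∑ j ∈ Tᶜ, A i j := by
        rw [perm, Fintype.sum_perm_eq_sum_surjective (fun φ => ∏ i, A i (φ i)),
          Fintype.sum_surjective_prod_eq_sum_compl (a := A)]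
    _ = ∑ S : Finset (Fin n), (-1 : R) ^ #Sᶜ * ∏ i, ∑ j ∈ S, A i j :=
        Fintype.sum_equiv (compl_involutive.toPerm _) _ _ fun T => by simp
    _ = _ := by simp only [mul_sum, ← mul_assoc, hsign]

section FiberCard

variable {ι κ : Type*} [DecidableEq κ]

def fiberCard (g : ι → κ) (S : Finset ι) (k : κ) : ℕ := #{j ∈ S | g j = k}

variable [Fintype κ]

theorem card_eq_sum_fiberCard (g : ι → κ) (S : Finset ι) : #S = ∑ k, fiberCard g S k :=
  card_eq_sum_card_fiberwise fun _ _ => mem_univ _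

theorem sum_comp_eq_sum_fiberCard_smul {M : Type*} [AddCommMonoid M] (g : ι → κ)
    (S : Finset ι) (v : κ → M) : ∑ j ∈ S, v (g j) = ∑ k, fiberCard g S k • v k := by
  rw [← sum_fiberwise S g]
  refine sum_congr rfl fun k _ => ?_
  rw [fiberCard, ← sum_const]
  exact sum_congr rfl fun j hj => by rw [(mem_filter.mp hj).2]

variable [Fintype ι] [DecidableEq ι]

theorem filter_biUnion_eq_of_subset_fiber (g : ι → κ) {F : κ → Finset ι}
    (hF : ∀ k, F k ⊆ ({j | g j = k} : Finset ι)) (k : κ) :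
    {j ∈ univ.biUnion F | g j = k} = F k := by
  ext j
  simp only [mem_filter, mem_biUnion, mem_univ, true_and]
  constructor
  · rintro ⟨⟨k', hj⟩, rfl⟩
    rwa [(mem_filter.mp (hF k' hj)).2]
  · exact fun hj => ⟨⟨k, hj⟩, (mem_filter.mp (hF k hj)).2⟩

theorem card_filter_fiberCard_eq (g : ι → κ) (f : κ → ℕ) :
    #{S : Finset ι | fiberCard g S = f} = ∏ k, (fiberCard g univ k).choose (f k) := by
  have hchoose (k : κ) : (fiberCard g univ k).choose (f k) =
      #(powersetCard (f k) ({j | g j = k} : Finset ι)) := (card_powersetCard _ _).symm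
  rw [prod_congr rfl fun k _ => hchoose k, ← Fintype.card_piFinset]
  refine card_bij' (fun S _ k => {j ∈ S | g j = k}) (fun F _ => univ.biUnion F) ?_ ?_ ?_ ?_
  · intro S hS
    simp only [mem_filter, mem_univ, true_and] at hS
    simp only [Fintype.mem_piFinset, mem_powersetCard]
    exact fun k => ⟨filter_subset_filter _ (subset_univ S), congrFun hS k⟩
  · intro F hF
    simp only [Fintype.mem_piFinset, mem_powersetCard] at hF
    simp only [mem_filter, mem_univ, true_and]
    funext k
    rw [fiberCard, filter_biUnion_eq_of_subset_fiber g (fun k => (hF k).1), (hF k).2]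
  · exact fun S _ => biUnion_filter_eq_of_maps_to fun j _ => mem_univ (g j)
  · intro F hF
    simp only [Fintype.mem_piFinset, mem_powersetCard] at hF
    exact funext (filter_biUnion_eq_of_subset_fiber g fun k => (hF k).1)

theorem sum_eq_sum_fiberCard {M : Type*} [AddCommMonoid M] (g : ι → κ)
    (F : (κ → ℕ) → M) :
    ∑ S : Finset ι, F (fiberCard g S) =
      ∑ f ∈ Fintype.piFinset (fun k => range (fiberCard g univ k + 1)),
        (∏ k, (fiberCard g univ k).choose (f k)) • F f := by
  have hmaps : ∀ S ∈ (univ : Finset (Finset ι)),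
      fiberCard g S ∈ Fintype.piFinset (fun k => range (fiberCard g univ k + 1)) := by
    intro S _
    simp only [Fintype.mem_piFinset, mem_range, Nat.lt_succ_iff]
    exact fun k => card_le_card (filter_subset_filter _ (subset_univ S))
  rw [← sum_fiberwise_of_maps_to hmaps]
  refine sum_congr rfl fun f _ => ?_
  rw [← card_filter_fiberCard_eq, ← sum_const]
  exact sum_congr rfl fun S hS => by rw [(mem_filter.mp hS).2]

end FiberCard

/-- Ryser's formula for matrices with repeated columns: the distinct columns of `A` are
`c 1, …, c t`, with `m k` columns of `A` equal to `c k`. -/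
theorem ryser_repeated_columns {n t : ℕ} {R : Type*} [CommRing R]
    (A : Matrix (Fin n) (Fin n) R) (c : Fin t → Fin n → R) (m : Fin t → ℕ)
    (g : Fin n → Fin t)
    (hcol : ∀ j i, A i j = c (g j) i)
    (hcount : ∀ k, (Finset.univ.filter (fun j => g j = k)).card = m k) :
    perm A = (-1 : R) ^ n *
      ∑ f ∈ Fintype.piFinset (fun k : Fin t => Finset.range (m k + 1)),
        (-1 : R) ^ (∑ k, f k) * (∏ k, ((m k).choose (f k) : R)) *
          ∏ i, ∑ k, (f k : R) * c k i := by
  have hsummand (S : Finset (Fin n)) : (-1 : R) ^ #S * ∏ i, ∑ j ∈ S, A i j =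
      (-1 : R) ^ (∑ k, fiberCard g S k) * ∏ i, ∑ k, (fiberCard g S k : R) * c k i := by
    rw [← card_eq_sum_fiberCard]
    refine congrArg _ (prod_congr rfl fun i _ => ?_)
    simp only [hcol, sum_comp_eq_sum_fiberCard_smul g S (c · i), nsmul_eq_mul]
  have hm : fiberCard g univ = m := funext hcount
  rw [perm_eq_sum_finset, sum_congr rfl fun S _ => hsummand S,
    sum_eq_sum_fiberCard g fun f => (-1 : R) ^ (∑ k, f k) * ∏ i, ∑ k, (f k : R) * c k i,
    hm]
  congr 1
  refine sum_congr rfl fun f _ => ?_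
  rw [nsmul_eq_mul, Nat.cast_prod]
  ring
end
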